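/- arXiv:1403.5540 — 3 statements merged into one kernel-verified Lean document; each statement's English description precedes it below -/
import Mathlib

section
/- Assume inf_{z∈Q} L_μ(z) > 0. Then μ(V) > 0, and for every v ∈ V^+ with ‖v‖ = 1 one has μ(v^- ∩ V) < μ(V). -/
open MeasureTheory Filter
open scoped RealInnerProductSpace

noncomputable section

/-- The positive orthant `Q` of `ℝ^d`. -/
def Qpos (d : ℕ) : Set (EuclideanSpace ℝ (Fin d)) := {x | ∀ i, 0 ≤ x i}

/-- An `r`-tuple `(u 0, …, u (r-1))` of vectors of the orthant is *admissible* if the vectors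
are linearly independent, `μ(u_1^-) = 1`, and
`μ(u_k^- ∩ u_{k-1}^⊥ ∩ ⋯ ∩ u_1^⊥) = μ(u_{k-1}^⊥ ∩ ⋯ ∩ u_1^⊥)` for `k = 2, …, r`
(the case `k = 1` of the displayed condition reads `μ(u_1^-) = μ(ℝ^d) = 1`). -/
def Admissible {d : ℕ} (μ : Measure (EuclideanSpace ℝ (Fin d))) {r : ℕ}
    (u : Fin r → EuclideanSpace ℝ (Fin d)) : Prop :=
  (∀ k, u k ∈ Qpos d) ∧ LinearIndependent ℝ u ∧
    ∀ k : Fin r,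
      μ ({x | ⟪x, u k⟫ ≤ 0} ∩ {x | ∀ j, j < k → ⟪x, u j⟫ = 0}) =
        μ {x | ∀ j, j < k → ⟪x, u j⟫ = 0}

/-- An admissible tuple is *maximal* if no vector `v ∈ Q` can be appended to it so that the
resulting tuple is still admissible. -/
def MaximalAdmissible {d : ℕ} (μ : Measure (EuclideanSpace ℝ (Fin d))) {r : ℕ}
    (u : Fin r → EuclideanSpace ℝ (Fin d)) : Prop :=
  Admissible μ u ∧ ∀ v ∈ Qpos d, ¬ Admissible μ (Fin.snoc u v)

/-- The Laplace transform `L_μ(z) = ∫ exp⟨z,y⟫ dμ(y)`. -/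
def laplace {d : ℕ} (μ : Measure (EuclideanSpace ℝ (Fin d)))
    (z : EuclideanSpace ℝ (Fin d)) : ℝ :=
  ∫ y, Real.exp ⟪z, y⟫ ∂μ

/-- The reduced support `V = span{u_1,…,u_r}^⊥` associated with a (maximal admissible) tuple. -/
def Vred {d : ℕ} {r : ℕ} (u : Fin r → EuclideanSpace ℝ (Fin d)) :
    Submodule ℝ (EuclideanSpace ℝ (Fin d)) :=
  (Submodule.span ℝ (Set.range u))ᗮ

/-- The cone `V^+ = V ∩ ⋃_{h ∈ V^⊥} (Q − h)`. -/
def Vplus {d : ℕ} {r : ℕ} (u : Fin r → EuclideanSpace ℝ (Fin d)) :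
    Set (EuclideanSpace ℝ (Fin d)) :=
  {v | v ∈ Vred u ∧ ∃ h ∈ (Vred u)ᗮ, v + h ∈ Qpos d}

/-!
Let `S_k = u_1^⊥ ∩ ⋯ ∩ u_k^⊥`. Admissibility says that `⟪·, u_{k+1}⟫ ≤ 0` holds `μ`-a.e. on `S_k`,
so for `z ∈ Q` dominated convergence turns `∫_{S_k} exp ⟪z + n u_{k+1}, ·⟫ dμ`, whose values are
bounded below by the same argument at level `k` since `z + n u_{k+1} ∈ Q`, into
`∫_{S_{k+1}} exp ⟪z, ·⟫ dμ` as `n → ∞`. Hence `inf_Q L_μ ≤ ∫_V exp ⟪z, ·⟫ dμ`, and `z = 0` gives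
`μ(V) ≥ inf_Q L_μ > 0`.

If `μ(v^- ∩ V) = μ(V)` for some `v ∈ V^+`, `v ≠ 0`, write `v + h ∈ Q` with `h ∈ V^⊥`. On `V` the
functionals `⟪·, v + h⟫` and `⟪·, v⟫` agree, and `v + h ∉ span u = V^⊥`, so `v + h` could be
appended to the tuple, contradicting maximality.
-/

open Set
open scoped Topology

theorem ae_restrict_mem_of_measure_inter_eq {α : Type*} [MeasurableSpace α] {ν : Measure α}
    [IsFiniteMeasure ν] {s t : Set α} (ht : MeasurableSet t) (h : ν (t ∩ s) = ν s) :
    ∀ᵐ x ∂ν.restrict s, x ∈ t := by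
  rw [ae_mem_iff_measure_eq ht.nullMeasurableSet, Measure.restrict_apply ht,
    Measure.restrict_apply_univ, h]

section ExpTilt

variable {E : Type*} [NormedAddCommGroup E] [InnerProductSpace ℝ E]

theorem tendsto_exp_inner_add_nsmul (z w y : E) (hy : ⟪y, w⟫ ≤ 0) :
    Tendsto (fun n : ℕ => Real.exp ⟪z + (n : ℝ) • w, y⟫) atTop
      (𝓝 ({y | ⟪y, w⟫ = 0}.indicator (fun y => Real.exp ⟪z, y⟫) y)) := by
  have hexp (n : ℕ) : Real.exp ⟪z + (n : ℝ) • w, y⟫ = Real.exp ⟪z, y⟫ * Real.exp ⟪y, w⟫ ^ n := by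
    rw [inner_add_left, real_inner_smul_left, real_inner_comm y w, Real.exp_add, ← Real.exp_nat_mul]
  simp_rw [hexp]
  rcases hy.lt_or_eq with hneg | hzero
  · rw [indicator_of_notMem (s := {y | ⟪y, w⟫ = 0}) hneg.ne, ← mul_zero (Real.exp ⟪z, y⟫)]
    exact (tendsto_pow_atTop_nhds_zero_of_lt_one (Real.exp_nonneg _)
      (Real.exp_lt_one_iff.2 hneg)).const_mul _
  · simp [hzero]

variable [MeasurableSpace E] [OpensMeasurableSpace E]

theorem tendsto_integral_exp_inner_add_nsmul {ν : Measure E} {z w : E}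
    (hz : Integrable (fun y => Real.exp ⟪z, y⟫) ν) (hw : ∀ᵐ y ∂ν, ⟪y, w⟫ ≤ 0) :
    Tendsto (fun n : ℕ => ∫ y, Real.exp ⟪z + (n : ℝ) • w, y⟫ ∂ν) atTop
      (𝓝 (∫ y in {y | ⟪y, w⟫ = 0}, Real.exp ⟪z, y⟫ ∂ν)) := by
  rw [← integral_indicator (isClosed_eq (by fun_prop) continuous_const).measurableSet]
  refine tendsto_integral_of_dominated_convergence _ (fun n => by fun_prop) hz (fun n => ?_) ?_
  · filter_upwards [hw] with y hy
    rw [Real.norm_of_nonneg (Real.exp_nonneg _), Real.exp_le_exp, inner_add_left,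
      real_inner_smul_left, real_inner_comm y w]
    exact add_le_of_nonpos_right (mul_nonpos_of_nonneg_of_nonpos n.cast_nonneg hy)
  · filter_upwards [hw] with y hy using tendsto_exp_inner_add_nsmul z w y hy

end ExpTilt

section PerpUpTo

variable {E : Type*} [NormedAddCommGroup E] [InnerProductSpace ℝ E] {r : ℕ}

/-- `u_1^⊥ ∩ ⋯ ∩ u_k^⊥`; `k` is a natural number rather than an element of `Fin r` so that
`k = r`, which gives `Vred u`, is allowed. -/
def perpUpTo (u : Fin r → E) (k : ℕ) : Set E := {x | ∀ j : Fin r, (j : ℕ) < k → ⟪x, u j⟫ = 0}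

theorem perpUpTo_zero (u : Fin r → E) : perpUpTo u 0 = univ := by
  simp [perpUpTo]

theorem perpUpTo_succ (u : Fin r → E) {k : ℕ} (hk : k < r) :
    perpUpTo u (k + 1) = perpUpTo u k ∩ {x | ⟪x, u ⟨k, hk⟩⟫ = 0} := by
  ext x
  simp only [perpUpTo, mem_inter_iff, mem_ofPred_eq, Nat.lt_succ_iff_lt_or_eq]
  refine ⟨fun hx => ⟨fun j hj => hx j (.inl hj), hx _ (.inr rfl)⟩, ?_⟩
  rintro ⟨hlt, hlast⟩ j (hj | rfl)
  exacts [hlt j hj, hlast]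

theorem perpUpTo_snoc (u : Fin r → E) (w : E) {k : ℕ} (hk : k ≤ r) :
    perpUpTo (Fin.snoc u w : Fin (r + 1) → E) k = perpUpTo u k := by
  ext x
  simp only [perpUpTo, mem_ofPred_eq]
  refine ⟨fun hx j hj => by simpa using hx j.castSucc hj, fun hx j hj => ?_⟩
  induction j using Fin.lastCases with
  | last => exact absurd hj (by simpa using hk)
  | cast i => simpa using hx i hj

theorem admissible_iff {d : ℕ} (μ : Measure (EuclideanSpace ℝ (Fin d)))
    (u : Fin r → EuclideanSpace ℝ (Fin d)) :
    Admissible μ u ↔ (∀ k, u k ∈ Qpos d) ∧ LinearIndependent ℝ u ∧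
      ∀ k : Fin r, μ ({x | ⟪x, u k⟫ ≤ 0} ∩ perpUpTo u k) = μ (perpUpTo u k) :=
  Iff.rfl

theorem coe_Vred_eq_perpUpTo {d : ℕ} (u : Fin r → EuclideanSpace ℝ (Fin d)) :
    (Vred u : Set (EuclideanSpace ℝ (Fin d))) = perpUpTo u r := by
  ext x
  rw [SetLike.mem_coe, Vred, ← Submodule.span_singleton_le_iff_mem, ← Submodule.isOrtho_iff_le,
    Submodule.isOrtho_span]
  simp [perpUpTo]

end PerpUpTo

section Admissible

variable {d r : ℕ} {μ : Measure (EuclideanSpace ℝ (Fin d))} {u : Fin r → EuclideanSpace ℝ (Fin d)}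

theorem Admissible.sInf_laplace_le_setIntegral [IsFiniteMeasure μ]
    (hexp : ∀ z, Integrable (fun y => Real.exp ⟪z, y⟫) μ) (hu : Admissible μ u) {k : ℕ}
    (hk : k ≤ r) {z : EuclideanSpace ℝ (Fin d)} (hz : z ∈ Qpos d) :
    sInf (laplace μ '' Qpos d) ≤ ∫ y in perpUpTo u k, Real.exp ⟪z, y⟫ ∂μ := by
  induction k generalizing z with
  | zero =>
    rw [perpUpTo_zero, Measure.restrict_univ]
    refine csInf_le ⟨0, ?_⟩ ⟨z, hz, rfl⟩
    rintro _ ⟨_, _, rfl⟩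
    exact integral_nonneg fun y => (Real.exp_pos _).le
  | succ k ih =>
    obtain ⟨huQ, -, hadm⟩ := (admissible_iff μ u).1 hu
    set w := u ⟨k, hk⟩
    have hw : ∀ᵐ y ∂μ.restrict (perpUpTo u k), ⟪y, w⟫ ≤ 0 :=
      ae_restrict_mem_of_measure_inter_eq
        (measurableSet_le (f := fun y => ⟪y, w⟫) (by fun_prop) measurable_const) (hadm ⟨k, hk⟩)
    have hlim := tendsto_integral_exp_inner_add_nsmul (hexp z).restrict hw
    rw [Measure.restrict_restrict
      (isClosed_eq (by fun_prop) continuous_const).measurableSet, ← inter_comm,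
      ← perpUpTo_succ] at hlim
    refine ge_of_tendsto hlim (Eventually.of_forall fun n => ih (by omega) fun i => ?_)
    simpa using add_nonneg (hz i) (mul_nonneg n.cast_nonneg (huQ ⟨k, hk⟩ i))

theorem Admissible.sInf_laplace_le_measureReal_Vred [IsFiniteMeasure μ]
    (hexp : ∀ z, Integrable (fun y => Real.exp ⟪z, y⟫) μ) (hu : Admissible μ u) :
    sInf (laplace μ '' Qpos d) ≤ μ.real (Vred u) := by
  simpa [coe_Vred_eq_perpUpTo] using hu.sInf_laplace_le_setIntegral hexp le_rfl (z := 0)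
    fun i => le_rfl

theorem Admissible.snoc (hu : Admissible μ u) {w : EuclideanSpace ℝ (Fin d)} (hw : w ∈ Qpos d)
    (hspan : w ∉ Submodule.span ℝ (range u))
    (hμ : μ ({x | ⟪x, w⟫ ≤ 0} ∩ Vred u) = μ (Vred u)) : Admissible μ (Fin.snoc u w) := by
  obtain ⟨huQ, hlin, hadm⟩ := (admissible_iff μ u).1 hu
  refine (admissible_iff μ _).2 ⟨fun k => ?_, linearIndependent_finSnoc.2 ⟨hlin, hspan⟩, fun k => ?_⟩
  · induction k using Fin.lastCases with
    | last => simpa using hw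
    | cast i => simpa using huQ i
  · induction k using Fin.lastCases with
    | last => simpa [perpUpTo_snoc _ _ le_rfl, ← coe_Vred_eq_perpUpTo] using hμ
    | cast i => simpa [perpUpTo_snoc _ _ i.is_lt.le] using hadm i

theorem MaximalAdmissible.measure_inter_Vred_lt (hu : MaximalAdmissible μ u)
    {v : EuclideanSpace ℝ (Fin d)} (hv : v ∈ Vplus u) (hv0 : v ≠ 0) :
    μ ({x | ⟪x, v⟫ ≤ 0} ∩ Vred u) < μ (Vred u) := by
  obtain ⟨hvV, h, hh, hvhQ⟩ := hv
  refine (measure_mono inter_subset_right).lt_of_ne fun heq =>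
    hu.2 (v + h) hvhQ (hu.1.snoc hvhQ (fun hmem => hv0 ?_) ?_)
  · have hspan : (Vred u)ᗮ = Submodule.span ℝ (range u) := Submodule.orthogonal_orthogonal _
    have hvperp : v ∈ (Vred u)ᗮ := by
      simpa [hspan] using sub_mem hmem (hspan ▸ hh : h ∈ Submodule.span ℝ (range u))
    exact (Submodule.mem_bot ℝ).1 ((Vred u).inf_orthogonal_eq_bot ▸ ⟨hvV, hvperp⟩)
  · convert heq using 2
    ext x
    simp only [mem_inter_iff, mem_ofPred_eq, SetLike.mem_coe, inner_add_right, and_congr_left_iff]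
    intro hx
    rw [(Submodule.mem_orthogonal _ _).1 hh x hx, add_zero]

end Admissible

theorem stmt4_general (d : ℕ)
    (μ : Measure (EuclideanSpace ℝ (Fin d))) [IsProbabilityMeasure μ]
    (hexp : ∀ z : EuclideanSpace ℝ (Fin d), Integrable (fun y => Real.exp ⟪z, y⟫) μ)
    {r : ℕ} (u : Fin r → EuclideanSpace ℝ (Fin d))
    (hu : MaximalAdmissible μ u)
    (hinf : 0 < sInf (laplace μ '' Qpos d)) :
    0 < μ (Vred u : Set (EuclideanSpace ℝ (Fin d))) ∧
      ∀ v ∈ Vplus u, ‖v‖ = 1 →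
        μ ({x | ⟪x, v⟫ ≤ 0} ∩ (Vred u : Set (EuclideanSpace ℝ (Fin d)))) <
          μ (Vred u : Set (EuclideanSpace ℝ (Fin d))) := by
  refine ⟨?_, fun v hv hnorm => hu.measure_inter_Vred_lt hv (norm_ne_zero_iff.1 (by simp [hnorm]))⟩
  have hVpos : 0 < μ.real (Vred u) := hinf.trans_le (hu.1.sInf_laplace_le_measureReal_Vred hexp)
  exact (ENNReal.toReal_pos_iff.1 hVpos).1

/-- If `inf_Q L_μ > 0`, then `μ(V) > 0` and for every unit vector `v ∈ V^+`,
`μ(v^- ∩ V) < μ(V)`. -/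
theorem stmt4 (d : ℕ) (hd : 1 ≤ d)
    (μ : Measure (EuclideanSpace ℝ (Fin d))) [IsProbabilityMeasure μ]
    (hexp : ∀ z : EuclideanSpace ℝ (Fin d), Integrable (fun y => Real.exp ⟪z, y⟫) μ)
    {r : ℕ} (hr : 1 ≤ r) (u : Fin r → EuclideanSpace ℝ (Fin d))
    (hu : MaximalAdmissible μ u)
    (hinf : 0 < sInf (laplace μ '' Qpos d)) :
    0 < μ (Vred u : Set (EuclideanSpace ℝ (Fin d))) ∧
      ∀ v ∈ Vplus u, ‖v‖ = 1 →
        μ ({x | ⟪x, v⟫ ≤ 0} ∩ (Vred u : Set (EuclideanSpace ℝ (Fin d)))) <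
          μ (Vred u : Set (EuclideanSpace ℝ (Fin d))) :=
  stmt4_general d μ hexp u hu hinf
end
end

section
/- Assume inf_{z∈Q} L_μ(z) > 0, so that μ(V) > 0, and let μ|V be the conditional distribution μ|V(A) = μ(A ∩ V)/μ(V). Then the Laplace transform L_{μ|V} attains a global minimum on V^+, i.e. there exists v_0 ∈ V^+ with L_{μ|V}(v_0) = inf_{v∈V^+} L_{μ|V}(v), and moreover inf_{z∈Q} L_μ(z) = μ(V) · L_{μ|V}(v_0). -/
open MeasureTheory Filter
open scoped RealInnerProductSpace

noncomputable section

/-!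
Pushing `z ∈ Q` to infinity successively along `u₁, …, u_r`, dominated convergence and
admissibility give `inf_Q L_μ ≤ f(z)`, where `f(z) = ∫_V exp⟨z, y⟩ dμ(y)`. Conversely `f(z)`
depends only on the projection of `z` onto `V`, which ranges over `V^+` as `z` ranges over `Q`,
and `f(z) ≤ L_μ(z)`. Hence `inf_Q L_μ = inf_{V^+} f`, and it remains to see that the convex
function `f` attains its infimum on the closed convex cone `V^+`. Otherwise its minimisers on
growing balls escape to infinity and yield a unit direction `w ∈ V^+` along which `f` does not
increase; boundedness of `t ↦ f(t w)` forces `⟨y, w⟩ ≤ 0` for `μ`-a.e. `y ∈ V`, and then a lift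
of `w` to `Q` could be appended to the maximal admissible tuple.
-/

open Set Filter Topology MeasureTheory Metric

section ClosedCone

variable {E : Type*} [NormedAddCommGroup E] [NormedSpace ℝ E]

lemma exists_sub_smul_nonneg_eq_zero {ι : Type*} [Fintype ι] {c g : ι → ℝ} (hc : 0 ≤ c)
    {i₀ : ι} (hi₀ : 0 < g i₀) : ∃ i, ∃ t : ℝ, 0 ≤ c - t • g ∧ (c - t • g) i = 0 := by
  classical
  obtain ⟨i, hi, hmin⟩ := (Finset.univ.filter fun j => 0 < g j).exists_min_image
    (fun j => c j / g j) ⟨i₀, by simp [hi₀]⟩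
  simp only [Finset.mem_filter, Finset.mem_univ, true_and] at hi hmin
  refine ⟨i, c i / g i, fun j => ?_, by simp [hi.ne']⟩
  simp only [Pi.sub_apply, Pi.smul_apply, smul_eq_mul, Pi.zero_apply, sub_nonneg]
  rcases lt_or_ge 0 (g j) with hj | hj
  · exact (le_div_iff₀ hj).mp (hmin j hj)
  · exact (mul_nonpos_of_nonneg_of_nonpos (div_nonneg (hc i) hi.le) hj).trans (hc j)

-- Conic Carathéodory: subtracting a multiple of a linear relation kills one coefficient.
lemma linearCombination_image_nonneg_eq_iUnion {n : ℕ} {b : Fin (n + 1) → E}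
    (hb : ¬ LinearIndependent ℝ b) :
    Fintype.linearCombination ℝ b '' Ici 0 =
      ⋃ i : Fin (n + 1), Fintype.linearCombination ℝ (b ∘ i.succAbove) '' Ici 0 := by
  obtain ⟨g, hg, i₀, hi₀⟩ : ∃ g : Fin (n + 1) → ℝ,
      Fintype.linearCombination ℝ b g = 0 ∧ ∃ i₀, 0 < g i₀ := by
    obtain ⟨g, hg, i₀, hgi₀⟩ := Fintype.not_linearIndependent_iff.mp hb
    rw [← Fintype.linearCombination_apply] at hg
    rcases hgi₀.lt_or_gt with h | h
    · exact ⟨-g, by simp [hg], i₀, by simpa using h⟩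
    · exact ⟨g, hg, i₀, h⟩
  refine Subset.antisymm ?_ (iUnion_subset fun i => ?_)
  · rintro _ ⟨c, hc, rfl⟩
    obtain ⟨i, t, hct, hi⟩ := exists_sub_smul_nonneg_eq_zero hc hi₀
    refine mem_iUnion.mpr ⟨i, (c - t • g) ∘ i.succAbove, fun j => hct _, ?_⟩
    have : Fintype.linearCombination ℝ b (c - t • g) = Fintype.linearCombination ℝ b c := by
      simp [hg]
    rw [← this, Fintype.linearCombination_apply, Fintype.linearCombination_apply,
      Fin.sum_univ_succAbove _ i, hi, zero_smul, zero_add]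
    rfl
  · rintro _ ⟨c, hc, rfl⟩
    refine ⟨Fin.insertNth i 0 c, fun j => ?_, ?_⟩
    · induction j using Fin.succAboveCases i with
      | x => simp
      | p j => simpa using hc j
    · simp [Fintype.linearCombination_apply, Fin.sum_univ_succAbove _ i]

theorem isClosed_linearCombination_image_nonneg :
    ∀ {n : ℕ} (b : Fin n → E), IsClosed (Fintype.linearCombination ℝ b '' Ici 0)
  | n, b => by
    by_cases hb : LinearIndependent ℝ b
    · exact (LinearMap.isClosedEmbedding_of_injective (LinearMap.ker_eq_bot.mpr
        hb.fintypeLinearCombination_injective)).isClosedMap _ isClosed_Ici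
    · cases n with
      | zero => exact absurd linearIndependent_empty_type hb
      | succ n =>
        rw [linearCombination_image_nonneg_eq_iUnion hb]
        exact isClosed_iUnion_of_finite fun i => isClosed_linearCombination_image_nonneg _

end ClosedCone

section Recession

variable {E : Type*} [NormedAddCommGroup E] [NormedSpace ℝ E] {C : Set E} {f : E → ℝ}

lemma ConvexOn.norm_eq_of_isMinOn_inter_closedBall (hf : ConvexOn ℝ C f) {R : ℝ} {z : E}
    (hz : z ∈ C ∩ closedBall 0 R) (hmin : IsMinOn f (C ∩ closedBall 0 R) z)
    (hnot : ¬ IsMinOn f C z) : ‖z‖ = R := by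
  refine (mem_closedBall_zero_iff.mp hz.2).antisymm (not_lt.mp fun hlt => hnot ?_)
  refine IsMinOn.of_isLocalMinOn_of_convexOn hz.1 ?_ hf
  have hball : closedBall (0 : E) R ∈ 𝓝[C] z :=
    mem_nhdsWithin_of_mem_nhds (closedBall_mem_nhds_of_mem (mem_ball_zero_iff.mpr hlt))
  exact (hmin.localize).filter_mono (by rw [nhdsWithin_inter_of_mem' hball])

lemma ConvexOn.map_add_smul_le_of_tendsto_inv_smul (hf : ConvexOn ℝ C f) (hfc : Continuous f)
    {z : ℕ → E} {R : ℕ → ℝ} {w : E} (hR : Tendsto R atTop atTop) (hzC : ∀ n, z n ∈ C)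
    (hmin : ∀ n, ∀ v ∈ C, ‖v‖ ≤ R n → f (z n) ≤ f v)
    (hw : Tendsto (fun n => (R n)⁻¹ • z n) atTop (𝓝 w)) {v : E} (hv : v ∈ C) {t : ℝ}
    (ht : 0 ≤ t) : f (v + t • w) ≤ f v := by
  set s : ℕ → ℝ := fun n => t * (R n)⁻¹
  have hs : Tendsto s atTop (𝓝 0) := by simpa using hR.inv_tendsto_atTop.const_mul t
  have hp : Tendsto (fun n => (1 - s n) • v + t • ((R n)⁻¹ • z n)) atTop (𝓝 (v + t • w)) := by
    simpa using (((tendsto_const_nhds (x := (1 : ℝ))).sub hs).smul_const v).add (hw.const_smul t)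
  refine le_of_tendsto ((hfc.tendsto _).comp hp) ?_
  filter_upwards [hR.eventually_gt_atTop 0, hR.eventually_ge_atTop t,
    hR.eventually_ge_atTop ‖v‖] with n hR0 hRt hRv
  have hs0 : 0 ≤ s n := mul_nonneg ht (inv_nonneg.mpr hR0.le)
  have hs1 : s n ≤ 1 := by simpa [s, ← div_eq_mul_inv] using (div_le_one hR0).mpr hRt
  have hfz := hmin n v hv hRv
  calc f ((1 - s n) • v + t • ((R n)⁻¹ • z n)) = f ((1 - s n) • v + s n • z n) := by
        rw [smul_smul]
    _ ≤ (1 - s n) • f v + s n • f (z n) :=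
        hf.2 hv (hzC n) (sub_nonneg.mpr hs1) hs0 (sub_add_cancel 1 (s n))
    _ ≤ f v := by simp only [smul_eq_mul]; nlinarith

theorem ConvexOn.exists_isMinOn_or_recession [FiniteDimensional ℝ E] (hC : IsClosed C)
    (hCc : Convex ℝ C) (h0 : 0 ∈ C) (hf : ConvexOn ℝ C f) (hfc : Continuous f) :
    (∃ v₀ ∈ C, IsMinOn f C v₀) ∨
      ∃ w ∈ C, w ≠ 0 ∧ ∀ v ∈ C, ∀ t : ℝ, 0 ≤ t → f (v + t • w) ≤ f v := by
  refine or_iff_not_imp_left.mpr fun hnot => ?_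
  have hball : ∀ n : ℕ, ∃ z ∈ C ∩ closedBall 0 (n + 1), IsMinOn f (C ∩ closedBall 0 (n + 1)) z :=
    fun n => ((isCompact_closedBall 0 _).inter_left hC).exists_isMinOn
      ⟨0, h0, by simp; positivity⟩ hfc.continuousOn
  choose z hz hzmin using hball
  have hznorm : ∀ n, ‖z n‖ = n + 1 := fun n =>
    hf.norm_eq_of_isMinOn_inter_closedBall (hz n) (hzmin n) fun h => hnot ⟨z n, (hz n).1, h⟩
  have hsphere : ∀ n : ℕ, ((n : ℝ) + 1)⁻¹ • z n ∈ sphere (0 : E) 1 := fun n => by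
    rw [mem_sphere_zero_iff_norm, norm_smul, hznorm, norm_inv, Real.norm_of_nonneg (by positivity),
      inv_mul_cancel₀ (by positivity)]
  obtain ⟨w, hw, φ, hφ, hlim⟩ := (isCompact_sphere (0 : E) 1).tendsto_subseq hsphere
  have hR : Tendsto (fun n => (φ n : ℝ) + 1) atTop atTop :=
    tendsto_atTop_add_const_right _ 1 (tendsto_natCast_atTop_atTop.comp hφ.tendsto_atTop)
  refine ⟨w, hC.mem_of_tendsto hlim (Eventually.of_forall fun n =>
      hCc.smul_mem_of_zero_mem h0 (hz (φ n)).1 ⟨by positivity, inv_le_one_of_one_le₀ (by simp)⟩),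
    ne_zero_of_mem_unit_sphere ⟨w, hw⟩, fun v hv t ht => ?_⟩
  exact hf.map_add_smul_le_of_tendsto_inv_smul hfc hR (fun n => (hz (φ n)).1)
    (fun n v hv hvR => hzmin (φ n) ⟨hv, mem_closedBall_zero_iff.mpr hvR⟩) hlim hv ht

end Recession

lemma ae_restrict_mem_iff_measure_inter_eq {α : Type*} [MeasurableSpace α] {μ : Measure α}
    [IsFiniteMeasure μ] {A : Set α} (hA : MeasurableSet A) (B : Set α) :
    (∀ᵐ y ∂μ.restrict B, y ∈ A) ↔ μ (A ∩ B) = μ B := by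
  rw [ae_iff_measure_eq (p := (· ∈ A)) hA.nullMeasurableSet, ofPred_mem_eq,
    Measure.restrict_apply hA, Measure.restrict_apply_univ]

section Geometry

variable {d r : ℕ} (u : Fin r → EuclideanSpace ℝ (Fin d))

lemma add_smul_mem_Qpos {z v : EuclideanSpace ℝ (Fin d)} (hz : z ∈ Qpos d) (hv : v ∈ Qpos d)
    {t : ℝ} (ht : 0 ≤ t) : z + t • v ∈ Qpos d :=
  fun i => by simpa using add_nonneg (hz i) (mul_nonneg ht (hv i))

lemma convex_Qpos : Convex ℝ (Qpos d) :=
  fun _ hx _ hy _ _ ha hb _ i => by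
    simpa using add_nonneg (mul_nonneg ha (hx i)) (mul_nonneg hb (hy i))

lemma Qpos_eq_image :
    Qpos d = (EuclideanSpace.basisFun (Fin d) ℝ).toBasis.equivFun.symm '' Ici 0 := by
  rw [LinearEquiv.image_symm_eq_preimage]
  rfl

lemma mem_Vred_iff {x : EuclideanSpace ℝ (Fin d)} : x ∈ Vred u ↔ ∀ j, ⟪x, u j⟫ = 0 := by
  rw [Vred, Submodule.mem_orthogonal']
  refine ⟨fun h j => h _ (Submodule.subset_span (mem_range_self j)), fun h y hy => ?_⟩
  have : Submodule.span ℝ (range u) ≤ LinearMap.ker (innerₛₗ ℝ x) :=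
    Submodule.span_le.mpr (by rintro _ ⟨j, rfl⟩; exact h j)
  exact this hy

lemma Vplus_eq_image : Vplus u = (Vred u).starProjection '' Qpos d := by
  ext v
  constructor
  · rintro ⟨hv, h, hh, hq⟩
    refine ⟨v + h, hq, ?_⟩
    rw [map_add, Submodule.starProjection_eq_self_iff.mpr hv,
      (Submodule.starProjection_apply_eq_zero_iff _).mpr hh, add_zero]
  · rintro ⟨z, hz, rfl⟩
    exact ⟨Submodule.starProjection_apply_mem _ _, z - (Vred u).starProjection z,
      Submodule.sub_starProjection_mem_orthogonal z, by simpa using hz⟩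

lemma isClosed_Vplus : IsClosed (Vplus u) := by
  have : Vplus u = Fintype.linearCombination ℝ
      (fun i => (Vred u).starProjection (EuclideanSpace.basisFun (Fin d) ℝ i)) '' Ici 0 := by
    rw [Vplus_eq_image, Qpos_eq_image, image_image]
    congr 1
    funext c
    simp only [Module.Basis.equivFun_symm_apply, map_sum, map_smul,
      Fintype.linearCombination_apply, OrthonormalBasis.coe_toBasis]
  rw [this]
  exact isClosed_linearCombination_image_nonneg _

lemma convex_Vplus : Convex ℝ (Vplus u) := by
  rw [Vplus_eq_image]
  exact convex_Qpos.linear_image (Vred u).starProjection.toLinearMap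

lemma zero_mem_Qpos : (0 : EuclideanSpace ℝ (Fin d)) ∈ Qpos d := fun _ => le_rfl

lemma zero_mem_Vplus : 0 ∈ Vplus u := by
  rw [Vplus_eq_image]
  exact ⟨0, zero_mem_Qpos, map_zero _⟩

end Geometry

section Laplace

variable {d : ℕ} {ν : Measure (EuclideanSpace ℝ (Fin d))}

lemma laplace_nonneg (z : EuclideanSpace ℝ (Fin d)) : 0 ≤ laplace ν z :=
  integral_nonneg fun _ => (Real.exp_pos _).le

lemma laplace_smul_measure (c : ENNReal) (z : EuclideanSpace ℝ (Fin d)) :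
    laplace (c • ν) z = c.toReal * laplace ν z := by
  simp [laplace, integral_smul_measure]

lemma laplace_cond (s : Set (EuclideanSpace ℝ (Fin d))) (z : EuclideanSpace ℝ (Fin d)) :
    laplace (ProbabilityTheory.cond ν s) z = (ν s).toReal⁻¹ * laplace (ν.restrict s) z := by
  rw [ProbabilityTheory.cond, laplace_smul_measure, ENNReal.toReal_inv]

lemma laplace_restrict_le {z : EuclideanSpace ℝ (Fin d)}
    (hz : Integrable (fun y => Real.exp ⟪z, y⟫) ν) (s : Set (EuclideanSpace ℝ (Fin d))) :
    laplace (ν.restrict s) z ≤ laplace ν z :=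
  setIntegral_le_integral hz (Eventually.of_forall fun _ => (Real.exp_pos _).le)

lemma convexOn_laplace (hν : ∀ z, Integrable (fun y => Real.exp ⟪z, y⟫) ν) :
    ConvexOn ℝ univ (laplace ν) := by
  refine ⟨convex_univ, fun a _ b _ s t hs ht hst => ?_⟩
  have hpt : ∀ y, Real.exp ⟪s • a + t • b, y⟫ ≤ s * Real.exp ⟪a, y⟫ + t * Real.exp ⟪b, y⟫ := by
    intro y
    simpa [inner_add_left, real_inner_smul_left] using
      convexOn_exp.2 (mem_univ ⟪a, y⟫) (mem_univ ⟪b, y⟫) hs ht hst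
  calc laplace ν (s • a + t • b)
      ≤ ∫ y, (s * Real.exp ⟪a, y⟫ + t * Real.exp ⟪b, y⟫) ∂ν :=
        integral_mono (hν _) (((hν a).const_mul s).add ((hν b).const_mul t)) hpt
    _ = s • laplace ν a + t • laplace ν b := by
        rw [integral_add ((hν a).const_mul s) ((hν b).const_mul t), integral_const_mul,
          integral_const_mul, laplace, laplace, smul_eq_mul, smul_eq_mul]

lemma continuous_laplace (hν : ∀ z, Integrable (fun y => Real.exp ⟪z, y⟫) ν) :
    Continuous (laplace ν) :=
  (convexOn_laplace hν).locallyLipschitz.continuous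

lemma laplace_restrict_starProjection (K : Submodule ℝ (EuclideanSpace ℝ (Fin d)))
    (z : EuclideanSpace ℝ (Fin d)) :
    laplace (ν.restrict K) (K.starProjection z) = laplace (ν.restrict K) z := by
  refine setIntegral_congr_fun K.closed_of_finiteDimensional.measurableSet fun y hy => ?_
  rw [K.inner_starProjection_left_eq_right, K.starProjection_eq_self_iff.mpr hy]

lemma tendsto_laplace_add_smul {z w : EuclideanSpace ℝ (Fin d)}
    (hz : Integrable (fun y => Real.exp ⟪z, y⟫) ν) (hw : ∀ᵐ y ∂ν, ⟪y, w⟫ ≤ 0) :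
    Tendsto (fun n : ℕ => laplace ν (z + (n : ℝ) • w)) atTop
      (𝓝 (laplace (ν.restrict {y | ⟪y, w⟫ = 0}) z)) := by
  have hmeas : MeasurableSet {y : EuclideanSpace ℝ (Fin d) | ⟪y, w⟫ = 0} :=
    measurableSet_eq_fun (by fun_prop) measurable_const
  have hsplit : ∀ (n : ℕ) y, Real.exp ⟪z + (n : ℝ) • w, y⟫ =
      Real.exp ⟪z, y⟫ * Real.exp (n * ⟪y, w⟫) := by
    intro n y
    rw [inner_add_left, real_inner_smul_left, real_inner_comm w, Real.exp_add]
  rw [laplace, ← integral_indicator hmeas]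
  refine tendsto_integral_of_dominated_convergence _ (fun n => by fun_prop) hz
    (fun n => ?_) ?_
  · filter_upwards [hw] with y hy
    rw [hsplit, Real.norm_eq_abs, abs_of_pos (by positivity)]
    exact mul_le_of_le_one_right (Real.exp_pos _).le
      (Real.exp_le_one_iff.mpr (mul_nonpos_of_nonneg_of_nonpos n.cast_nonneg hy))
  · filter_upwards [hw] with y hy
    simp only [hsplit]
    rcases hy.lt_or_eq with hneg | hzero
    · rw [indicator_of_notMem (show y ∉ {y | ⟪y, w⟫ = 0} from hneg.ne)]
      simpa using (Real.tendsto_exp_atBot.comp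
        (tendsto_natCast_atTop_atTop.atTop_mul_const_of_neg hneg)).const_mul (Real.exp ⟪z, y⟫)
    · simp [hzero]

lemma ae_inner_lt_of_laplace_smul_le [IsFiniteMeasure ν]
    (hν : ∀ z, Integrable (fun y => Real.exp ⟪z, y⟫) ν) {w : EuclideanSpace ℝ (Fin d)} {M : ℝ}
    (hM : ∀ t : ℝ, 0 ≤ t → laplace ν (t • w) ≤ M) {ε : ℝ} (hε : 0 < ε) :
    ∀ᵐ y ∂ν, ⟪y, w⟫ < ε := by
  have hmarkov : ∀ t : ℝ, 0 < t → ν.real {y | ε ≤ ⟪y, w⟫} ≤ M * Real.exp (-(t * ε)) := by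
    intro t ht
    have hset : {y | ε ≤ ⟪y, w⟫} = {y | Real.exp (t * ε) ≤ Real.exp ⟪t • w, y⟫} := by
      ext y
      simp [real_inner_smul_left, real_inner_comm w, mul_le_mul_iff_right₀ ht]
    rw [Real.exp_neg, ← div_eq_mul_inv, le_div_iff₀ (Real.exp_pos _), mul_comm, hset]
    exact (mul_meas_ge_le_integral_of_nonneg (Eventually.of_forall fun _ => (Real.exp_pos _).le)
      (hν _) _).trans (hM t ht.le)
  have hlim : Tendsto (fun t : ℝ => M * Real.exp (-(t * ε))) atTop (𝓝 0) := by
    simpa using (Real.tendsto_exp_neg_atTop_nhds_zero.comp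
      (tendsto_id.atTop_mul_const hε)).const_mul M
  have hnull : ν.real {y | ε ≤ ⟪y, w⟫} = 0 :=
    (ge_of_tendsto hlim ((eventually_gt_atTop 0).mono hmarkov)).antisymm measureReal_nonneg
  rw [measureReal_eq_zero_iff] at hnull
  simpa [ae_iff] using hnull

lemma ae_inner_nonpos_of_laplace_smul_le [IsFiniteMeasure ν]
    (hν : ∀ z, Integrable (fun y => Real.exp ⟪z, y⟫) ν) {w : EuclideanSpace ℝ (Fin d)} {M : ℝ}
    (hM : ∀ t : ℝ, 0 ≤ t → laplace ν (t • w) ≤ M) : ∀ᵐ y ∂ν, ⟪y, w⟫ ≤ 0 := by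
  have hlt : ∀ᵐ y ∂ν, ∀ n : ℕ, ⟪y, w⟫ < 1 / (n + 1) := ae_all_iff.mpr fun n =>
    ae_inner_lt_of_laplace_smul_le hν hM Nat.one_div_pos_of_nat
  filter_upwards [hlt] with y hy
  exact le_of_forall_pos_lt_add fun ε hε => by
    obtain ⟨n, hn⟩ := exists_nat_one_div_lt hε
    simpa using (hy n).trans hn

end Laplace

section Admissible

variable {d r : ℕ} {μ : Measure (EuclideanSpace ℝ (Fin d))} {u : Fin r → EuclideanSpace ℝ (Fin d)}

lemma measurableSet_inner_nonpos (w : EuclideanSpace ℝ (Fin d)) :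
    MeasurableSet {x : EuclideanSpace ℝ (Fin d) | ⟪x, w⟫ ≤ 0} :=
  measurableSet_le (by fun_prop) measurable_const

theorem sInf_laplace_le_laplace_restrict_Vred [IsFiniteMeasure μ] (hu : Admissible μ u)
    (hexp : ∀ z, Integrable (fun y => Real.exp ⟪z, y⟫) μ) {z : EuclideanSpace ℝ (Fin d)}
    (hz : z ∈ Qpos d) :
    sInf (laplace μ '' Qpos d) ≤ laplace (μ.restrict (Vred u)) z := by
  let T : ℕ → Set (EuclideanSpace ℝ (Fin d)) :=
    fun k => {x | ∀ j : Fin r, (j : ℕ) < k → ⟪x, u j⟫ = 0}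
  suffices ∀ k ≤ r, ∀ z ∈ Qpos d, sInf (laplace μ '' Qpos d) ≤ laplace (μ.restrict (T k)) z by
    have hV : (Vred u : Set (EuclideanSpace ℝ (Fin d))) = T r := by
      ext x
      simp [T, mem_Vred_iff]
    simpa [hV] using this r le_rfl z hz
  intro k
  induction k with
  | zero =>
    intro _ z hz
    have hbdd : BddBelow (laplace μ '' Qpos d) :=
      ⟨0, by rintro _ ⟨_, _, rfl⟩; exact laplace_nonneg _⟩
    simpa [T] using csInf_le hbdd ⟨z, hz, rfl⟩
  | succ k ih =>
    intro hk z hz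
    let j : Fin r := ⟨k, hk⟩
    have hTsucc : T (k + 1) = {y | ⟪y, u j⟫ = 0} ∩ T k := by
      ext x
      simp only [T, mem_ofPred_eq, mem_inter_iff, Nat.lt_succ_iff_lt_or_eq, or_imp, forall_and]
      refine ⟨fun ⟨h₁, h₂⟩ => ⟨h₂ j rfl, h₁⟩, fun ⟨h₁, h₂⟩ => ⟨h₂, fun i hi => ?_⟩⟩
      obtain rfl : i = j := Fin.ext hi
      exact h₁
    have hae : ∀ᵐ y ∂μ.restrict (T k), ⟪y, u j⟫ ≤ 0 :=
      (ae_restrict_mem_iff_measure_inter_eq (measurableSet_inner_nonpos _) _).mpr (hu.2.2 j)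
    rw [hTsucc, ← Measure.restrict_restrict (measurableSet_eq_fun (by fun_prop) measurable_const)]
    refine ge_of_tendsto' (tendsto_laplace_add_smul (hexp z).restrict hae) fun n => ?_
    exact ih (k.le_succ.trans hk) _ (add_smul_mem_Qpos hz (hu.1 j) n.cast_nonneg)

lemma admissible_snoc [IsFiniteMeasure μ] (hu : Admissible μ u) {z : EuclideanSpace ℝ (Fin d)}
    (hzQ : z ∈ Qpos d)
    (hz : z ∉ Submodule.span ℝ (range u)) (hae : ∀ᵐ y ∂μ.restrict (Vred u), ⟪y, z⟫ ≤ 0) :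
    Admissible μ (Fin.snoc u z) := by
  refine ⟨Fin.lastCases (by simpa using hzQ) (by simpa using hu.1),
    linearIndependent_finSnoc.mpr ⟨hu.2.1, hz⟩, Fin.lastCases ?_ fun k => ?_⟩
  · have hV : {x | ∀ j, j < Fin.last r →
        ⟪x, (Fin.snoc u z : Fin (r + 1) → EuclideanSpace ℝ (Fin d)) j⟫ = 0} = Vred u := by
      ext x
      simp [mem_Vred_iff, Fin.forall_fin_succ']
    rw [hV, Fin.snoc_last]
    exact (ae_restrict_mem_iff_measure_inter_eq (measurableSet_inner_nonpos z) _).mp hae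
  · have hT : {x | ∀ j, j < k.castSucc →
        ⟪x, (Fin.snoc u z : Fin (r + 1) → EuclideanSpace ℝ (Fin d)) j⟫ = 0} =
          {x | ∀ j, j < k → ⟪x, u j⟫ = 0} := by
      ext x
      simp [Fin.forall_fin_succ', (Fin.castSucc_lt_last k).not_gt]
    simpa [hT] using hu.2.2 k

end Admissible

theorem exists_isMinOn_laplace_restrict_Vplus {d r : ℕ} {μ : Measure (EuclideanSpace ℝ (Fin d))}
    [IsFiniteMeasure μ] {u : Fin r → EuclideanSpace ℝ (Fin d)} (hu : MaximalAdmissible μ u)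
    (hexp : ∀ z, Integrable (fun y => Real.exp ⟪z, y⟫) μ) :
    ∃ v₀ ∈ Vplus u, IsMinOn (laplace (μ.restrict (Vred u))) (Vplus u) v₀ := by
  have hexpV : ∀ z, Integrable (fun y => Real.exp ⟪z, y⟫) (μ.restrict (Vred u)) :=
    fun z => (hexp z).restrict
  have hconv := (convexOn_laplace hexpV).subset (subset_univ _) (convex_Vplus u)
  refine (hconv.exists_isMinOn_or_recession (isClosed_Vplus u) (convex_Vplus u) (zero_mem_Vplus u)
    (continuous_laplace hexpV)).resolve_right ?_
  rintro ⟨w, hw, hw0, hrec⟩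
  rw [Vplus_eq_image] at hw
  obtain ⟨z, hzQ, rfl⟩ := hw
  have hae : ∀ᵐ y ∂μ.restrict (Vred u), ⟪y, (Vred u).starProjection z⟫ ≤ 0 :=
    ae_inner_nonpos_of_laplace_smul_le hexpV fun t ht => by
      simpa using hrec 0 (zero_mem_Vplus u) t ht
  refine hu.2 z hzQ (admissible_snoc hu.1 hzQ (fun hspan => hw0 ?_) ?_)
  · rwa [Submodule.starProjection_apply_eq_zero_iff, Vred, Submodule.orthogonal_orthogonal]
  · filter_upwards [hae, ae_restrict_mem (Vred u).closed_of_finiteDimensional.measurableSet]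
      with y hy hyV
    rwa [← (Vred u).inner_starProjection_left_eq_right,
      (Vred u).starProjection_eq_self_iff.mpr hyV] at hy

theorem sInf_laplace_eq_of_isMinOn {d r : ℕ} {μ : Measure (EuclideanSpace ℝ (Fin d))}
    [IsFiniteMeasure μ] {u : Fin r → EuclideanSpace ℝ (Fin d)} (hu : Admissible μ u)
    (hexp : ∀ z, Integrable (fun y => Real.exp ⟪z, y⟫) μ) {v₀ : EuclideanSpace ℝ (Fin d)}
    (hv₀ : v₀ ∈ Vplus u) (hmin : IsMinOn (laplace (μ.restrict (Vred u))) (Vplus u) v₀) :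
    sInf (laplace μ '' Qpos d) = laplace (μ.restrict (Vred u)) v₀ := by
  refine le_antisymm ?_ (le_csInf ⟨_, mem_image_of_mem _ zero_mem_Qpos⟩ ?_)
  · obtain ⟨z, hz, rfl⟩ := Vplus_eq_image u ▸ hv₀
    rw [laplace_restrict_starProjection]
    exact sInf_laplace_le_laplace_restrict_Vred hu hexp hz
  · rintro _ ⟨z, hz, rfl⟩
    calc laplace (μ.restrict (Vred u)) v₀
        ≤ laplace (μ.restrict (Vred u)) ((Vred u).starProjection z) :=
          hmin (Vplus_eq_image u ▸ mem_image_of_mem _ hz)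
      _ = laplace (μ.restrict (Vred u)) z := laplace_restrict_starProjection _ _
      _ ≤ laplace μ z := laplace_restrict_le (hexp z) _

theorem stmt5_general (d : ℕ)
    (μ : Measure (EuclideanSpace ℝ (Fin d))) [IsProbabilityMeasure μ]
    (hexp : ∀ z : EuclideanSpace ℝ (Fin d), Integrable (fun y => Real.exp ⟪z, y⟫) μ)
    {r : ℕ} (u : Fin r → EuclideanSpace ℝ (Fin d))
    (hu : MaximalAdmissible μ u)
    (hinf : 0 < sInf (laplace μ '' Qpos d)) :
    ∃ v₀ ∈ Vplus u,
      (∀ v ∈ Vplus u,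
        laplace (ProbabilityTheory.cond μ (Vred u : Set (EuclideanSpace ℝ (Fin d)))) v₀ ≤
          laplace (ProbabilityTheory.cond μ (Vred u : Set (EuclideanSpace ℝ (Fin d)))) v) ∧
      sInf (laplace μ '' Qpos d) =
        (μ (Vred u : Set (EuclideanSpace ℝ (Fin d)))).toReal *
          laplace (ProbabilityTheory.cond μ (Vred u : Set (EuclideanSpace ℝ (Fin d)))) v₀ := by
  set V : Set (EuclideanSpace ℝ (Fin d)) := (Vred u : Set (EuclideanSpace ℝ (Fin d)))
  obtain ⟨v₀, hv₀, hmin⟩ := exists_isMinOn_laplace_restrict_Vplus hu hexp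
  have hinf_eq := sInf_laplace_eq_of_isMinOn hu.1 hexp hv₀ hmin
  have hV0 : μ V ≠ 0 := fun h => hinf.ne' <| by
    rw [hinf_eq, Measure.restrict_eq_zero.mpr h]
    simp [laplace]
  refine ⟨v₀, hv₀, fun v hv => ?_, ?_⟩
  · rw [laplace_cond, laplace_cond]
    exact mul_le_mul_of_nonneg_left (hmin hv) (by positivity)
  · rw [laplace_cond, ← mul_assoc,
      mul_inv_cancel₀ (ENNReal.toReal_ne_zero.mpr ⟨hV0, measure_ne_top μ V⟩), one_mul, hinf_eq]

/-- If `inf_Q L_μ > 0`, then the Laplace transform of the conditional distribution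
`μ|V = μ[|V]` attains a global minimum on `V^+` at some `v₀`, and
`inf_Q L_μ = μ(V) · L_{μ|V}(v₀)`. -/
theorem stmt5 (d : ℕ) (hd : 1 ≤ d)
    (μ : Measure (EuclideanSpace ℝ (Fin d))) [IsProbabilityMeasure μ]
    (hexp : ∀ z : EuclideanSpace ℝ (Fin d), Integrable (fun y => Real.exp ⟪z, y⟫) μ)
    {r : ℕ} (hr : 1 ≤ r) (u : Fin r → EuclideanSpace ℝ (Fin d))
    (hu : MaximalAdmissible μ u)
    (hinf : 0 < sInf (laplace μ '' Qpos d)) :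
    ∃ v₀ ∈ Vplus u,
      (∀ v ∈ Vplus u,
        laplace (ProbabilityTheory.cond μ (Vred u : Set (EuclideanSpace ℝ (Fin d)))) v₀ ≤
          laplace (ProbabilityTheory.cond μ (Vred u : Set (EuclideanSpace ℝ (Fin d)))) v) ∧
      sInf (laplace μ '' Qpos d) =
        (μ (Vred u : Set (EuclideanSpace ℝ (Fin d)))).toReal *
          laplace (ProbabilityTheory.cond μ (Vred u : Set (EuclideanSpace ℝ (Fin d)))) v₀ :=
  stmt5_general d μ hexp u hu hinf
end
end

section
/- Assume (H') holds and m ∈ Q×{0}^q. Then for every x ∈ K ∩ G, (x + m + F) ∩ int(K) ∩ B_J(0,1) ≠ ∅, where int(K) denotes the interior of K. -/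
open MeasureTheory Filter
open scoped RealInnerProductSpace

noncomputable section

/-- The shifted cone `K_δ = Q_δ × ℝ^q` in `ℝ^{p+q}` (so `K = K_0`). -/
def Kcone (p q : ℕ) (δ : ℝ) : Set (EuclideanSpace ℝ (Fin (p + q))) :=
  {x | ∀ i : Fin (p + q), (i : ℕ) < p → δ ≤ x i}

/-- The set `Q × {0}^q ⊆ ℝ^{p+q}`. -/
def QZero (p q : ℕ) : Set (EuclideanSpace ℝ (Fin (p + q))) :=
  {x | ∀ i : Fin (p + q), ((i : ℕ) < p → 0 ≤ x i) ∧ (p ≤ (i : ℕ) → x i = 0)}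

/-- `‖x‖_J = (Σ_{j ∈ J} x_j²)^{1/2}` where `J = {j : m_j = 0}`. -/
def normJ {d : ℕ} (m x : EuclideanSpace ℝ (Fin d)) : ℝ :=
  Real.sqrt (∑ j, if m j = 0 then x j ^ 2 else 0)

/-- The covariance matrix `Γ_{ij} = ∫ (y_i − m_i)(y_j − m_j) dμ(y)`. -/
def covMatrix {d : ℕ} (μ : Measure (EuclideanSpace ℝ (Fin d)))
    (m : EuclideanSpace ℝ (Fin d)) : Matrix (Fin d) (Fin d) ℝ :=
  Matrix.of fun i j => ∫ y, (y i - m i) * (y j - m j) ∂μ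

/-- `F = (ker Γ)^⊥`, the orthogonal complement of the kernel of the covariance matrix. -/
def Fsub {d : ℕ} (μ : Measure (EuclideanSpace ℝ (Fin d)))
    (m : EuclideanSpace ℝ (Fin d)) : Submodule ℝ (EuclideanSpace ℝ (Fin d)) :=
  (LinearMap.ker (Matrix.toEuclideanLin (covMatrix μ m)))ᗮ

/-- The smoothed support `G = ℝ₊ m + F`. -/
def Gset {d : ℕ} (μ : Measure (EuclideanSpace ℝ (Fin d)))
    (m : EuclideanSpace ℝ (Fin d)) : Set (EuclideanSpace ℝ (Fin d)) :=
  {z | ∃ lam : ℝ, 0 ≤ lam ∧ ∃ f ∈ Fsub μ m, z = lam • m + f}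


/-!
Let `S = {i < p : mᵢ = 0}`. Separating the open convex cone `{g : gᵢ > 0 for i ∈ S}` from `F`
(Gordan's alternative) shows that either `F` contains a `g` positive on `S`, or some `u ≠ 0`
orthogonal to `F` is nonnegative on `S` and vanishes off `S`. The latter is impossible: such a `u`
lies in `Q × {0}^q` and is orthogonal to `m`, and `F^⊥ = ker Γ` gives
`∫ ⟪y - m, u⟫² dμ = ⟪u, Γ u⟫ = 0`, so `μ` is carried by `u^⊥ ⊆ u^-`, against (H').
Given `g`, for `x = λ m + f ∈ G` the point `(λ + 1) m + t g` lies in `x + m + F`; its first `p`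
coordinates are positive for small `t > 0` and its `‖·‖_J` is `t ‖g‖_J`.
-/

open Topology

section Gordan

variable {ι : Type*} [Fintype ι]

lemma isOpen_setOf_forall_pos (S : Set ι) :
    IsOpen {x : EuclideanSpace ℝ ι | ∀ i ∈ S, 0 < x i} := by
  simp only [Set.ofPred_forall]
  exact S.toFinite.isOpen_biInter fun i _ =>
    isOpen_lt continuous_const (EuclideanSpace.proj i).continuous

omit [Fintype ι] in
lemma convex_setOf_forall_pos (S : Set ι) :
    Convex ℝ {x : EuclideanSpace ℝ ι | ∀ i ∈ S, 0 < x i} := by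
  simp only [Set.ofPred_forall]
  exact convex_iInter₂ fun i _ => convex_halfSpace_gt (EuclideanSpace.proj i).isLinear 0

lemma nonpos_of_forall_add_mul_le {a b c : ℝ} (h : ∀ t : ℝ, 0 ≤ t → a + t * b ≤ c) :
    b ≤ 0 := by
  by_contra! hb
  have := h ((|c - a| + 1) / b) (by positivity)
  rw [div_mul_cancel₀ _ hb.ne'] at this
  linarith [le_abs_self (c - a)]

lemma exists_mem_orthogonal_of_not_exists_pos (F : Submodule ℝ (EuclideanSpace ℝ ι))
    (S : Set ι) (h : ¬ ∃ g ∈ F, ∀ i ∈ S, 0 < g i) :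
    ∃ u ∈ Fᗮ, u ≠ 0 ∧ (∀ i ∈ S, 0 ≤ u i) ∧ ∀ i ∉ S, u i = 0 := by
  classical
  have hdisj : Disjoint {x : EuclideanSpace ℝ ι | ∀ i ∈ S, 0 < x i} F :=
    Set.disjoint_left.2 fun g hgU hgF => h ⟨g, hgF, hgU⟩
  obtain ⟨f, c, hfU, hfF⟩ := geometric_hahn_banach_open (convex_setOf_forall_pos S)
    (isOpen_setOf_forall_pos S) F.convex hdisj
  have hfF0 : ∀ b ∈ F, f b = 0 := by
    intro b hb
    have hc : ∀ s : ℝ, c ≤ s * f b := fun s => by simpa using hfF _ (F.smul_mem s hb)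
    refine le_antisymm (nonpos_of_forall_add_mul_le (a := 0) (c := -c) fun t _ => ?_)
      (neg_nonpos.1 (nonpos_of_forall_add_mul_le (a := 0) (c := -c) fun t _ => ?_))
    · linarith [hc (-t)]
    · linarith [hc t]
  set w : EuclideanSpace ℝ ι := WithLp.toLp 2 fun _ => 1
  have hray : ∀ i (t : ℝ), (i ∈ S → 0 ≤ t) → f w + t * f (EuclideanSpace.single i 1) < c := by
    intro i t ht
    have hmem :
        w + t • EuclideanSpace.single i 1 ∈ {x : EuclideanSpace ℝ ι | ∀ i ∈ S, 0 < x i} := by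
      intro j hj
      by_cases hji : j = i
      · subst hji
        simp only [PiLp.add_apply, PiLp.smul_apply, PiLp.single_eq_same, smul_eq_mul, mul_one, w]
        linarith [ht hj]
      · simp [w, hji]
    simpa using hfU _ hmem
  have hfw : f w < 0 := (hfU w (by simp [w])).trans_le (by simpa using hfF 0 F.zero_mem)
  set u : EuclideanSpace ℝ ι := -(InnerProductSpace.toDual ℝ _).symm f
  have hu : ∀ x, ⟪u, x⟫ = -f x := fun x => by simp [u]
  have hui : ∀ i, u i = -f (EuclideanSpace.single i 1) := fun i => by
    rw [← hu, EuclideanSpace.inner_single_right]; simp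
  refine ⟨u, ?_, ?_, fun i hi => ?_, fun i hi => ?_⟩
  · exact (Submodule.mem_orthogonal' _ _).2 fun v hv => by rw [hu, hfF0 v hv, neg_zero]
  · intro hu0
    have := hu w
    rw [hu0, inner_zero_left] at this
    linarith
  · rw [hui, neg_nonneg]
    exact nonpos_of_forall_add_mul_le fun t ht => (hray i t fun _ => ht).le
  · have hle := nonpos_of_forall_add_mul_le fun t _ => (hray i t fun hi' => absurd hi' hi).le
    have hge := nonpos_of_forall_add_mul_le (b := -f (EuclideanSpace.single i 1)) fun t _ => by
      simpa using (hray i (-t) fun hi' => absurd hi' hi).le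
    rw [hui]
    linarith

end Gordan

section Covariance

open Matrix

variable {d : ℕ} {μ : Measure (EuclideanSpace ℝ (Fin d))} [IsFiniteMeasure μ]

lemma memLp_two_sub (hsq : Integrable (fun y => ‖y‖ ^ 2) μ) (m : EuclideanSpace ℝ (Fin d)) :
    MemLp (fun y => y - m) 2 μ :=
  ((memLp_two_iff_integrable_sq_norm aestronglyMeasurable_id).2 hsq).sub (memLp_const m)

lemma integrable_mul_coord_sub (hsq : Integrable (fun y => ‖y‖ ^ 2) μ)
    (m : EuclideanSpace ℝ (Fin d)) (i j : Fin d) :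
    Integrable (fun y => (y i - m i) * (y j - m j)) μ := by
  have hcoord : ∀ k, MemLp (fun y : EuclideanSpace ℝ (Fin d) => y k - m k) 2 μ := fun k =>
    (EuclideanSpace.proj (𝕜 := ℝ) k).comp_memLp' (memLp_two_sub hsq m)
  exact (hcoord i).integrable_mul (hcoord j)

lemma integral_inner_sub_sq (hsq : Integrable (fun y => ‖y‖ ^ 2) μ)
    (m u : EuclideanSpace ℝ (Fin d)) :
    ∫ y, ⟪y - m, u⟫ ^ 2 ∂μ = u.ofLp ⬝ᵥ (covMatrix μ m *ᵥ u.ofLp) := by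
  have hexpand : ∀ y : EuclideanSpace ℝ (Fin d),
      ⟪y - m, u⟫ ^ 2 = ∑ i, ∑ j, u i * u j * ((y i - m i) * (y j - m j)) := by
    intro y
    simp only [PiLp.inner_apply, RCLike.inner_apply, conj_trivial, PiLp.sub_apply, sq,
      Finset.sum_mul_sum]
    refine Finset.sum_congr rfl fun i _ => Finset.sum_congr rfl fun j _ => by ring
  simp_rw [hexpand]
  rw [integral_finsetSum _ fun i _ => integrable_finsetSum _ fun j _ =>
    (integrable_mul_coord_sub hsq m i j).const_mul _]
  simp only [dotProduct, Matrix.mulVec, Finset.mul_sum]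
  refine Finset.sum_congr rfl fun i _ => ?_
  rw [integral_finsetSum _ fun j _ => (integrable_mul_coord_sub hsq m i j).const_mul _]
  refine Finset.sum_congr rfl fun j _ => ?_
  rw [integral_const_mul, covMatrix, Matrix.of_apply]
  ring

lemma ae_inner_sub_eq_zero_of_mem_ker (hsq : Integrable (fun y => ‖y‖ ^ 2) μ)
    {m u : EuclideanSpace ℝ (Fin d)}
    (hu : u ∈ LinearMap.ker (Matrix.toEuclideanLin (covMatrix μ m))) :
    ∀ᵐ y ∂μ, ⟪y - m, u⟫ = 0 := by
  have hint : Integrable (fun y => ⟪y - m, u⟫ ^ 2) μ := by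
    simp_rw [real_inner_comm u]
    exact ((innerSL ℝ u).comp_memLp' (memLp_two_sub hsq m)).integrable_sq
  have hzero : ∫ y, ⟪y - m, u⟫ ^ 2 ∂μ = 0 := by
    rw [integral_inner_sub_sq hsq, show covMatrix μ m *ᵥ u.ofLp = 0 from congrArg WithLp.ofLp hu,
      dotProduct_zero]
  filter_upwards [(integral_eq_zero_iff_of_nonneg (fun y => sq_nonneg _) hint).1 hzero]
    with y hy using pow_eq_zero_iff two_ne_zero |>.1 hy

end Covariance

lemma exists_mem_Fsub_forall_pos {p q : ℕ} {μ : Measure (EuclideanSpace ℝ (Fin (p + q)))}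
    [IsProbabilityMeasure μ] {m : EuclideanSpace ℝ (Fin (p + q))}
    (hsq : Integrable (fun y => ‖y‖ ^ 2) μ)
    (hH : ∀ u ∈ QZero p q, u ≠ 0 → μ {x | ⟪x, u⟫ ≤ 0} ≠ 1) :
    ∃ g ∈ Fsub μ m, ∀ i : Fin (p + q), (i : ℕ) < p → m i = 0 → 0 < g i := by
  by_contra hcon
  obtain ⟨u, huF, hu0, hupos, huzero⟩ :=
    exists_mem_orthogonal_of_not_exists_pos (Fsub μ m) {i | (i : ℕ) < p ∧ m i = 0}
      fun ⟨g, hg, hpos⟩ => hcon ⟨g, hg, fun i hip hmi => hpos i ⟨hip, hmi⟩⟩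
  have huQ : u ∈ QZero p q := fun i =>
    ⟨fun hip => if hmi : m i = 0 then hupos i ⟨hip, hmi⟩ else (huzero i fun h => hmi h.2).ge,
      fun hpi => huzero i fun h => absurd h.1 (by omega)⟩
  have hmu : ⟪m, u⟫ = 0 := by
    refine Finset.sum_eq_zero fun i _ => ?_
    by_cases hi : (i : ℕ) < p ∧ m i = 0
    · simp [hi.2]
    · simp [huzero i hi]
  have hker : u ∈ LinearMap.ker (Matrix.toEuclideanLin (covMatrix μ m)) := by
    rwa [Fsub, Submodule.orthogonal_orthogonal] at huF
  have hae : ∀ᵐ y ∂μ, ⟪y, u⟫ ≤ 0 := by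
    filter_upwards [ae_inner_sub_eq_zero_of_mem_ker hsq hker] with y hy
    rw [inner_sub_left, hmu, sub_zero] at hy
    exact hy.le
  refine hH u huQ hu0 (((ae_iff_measure_eq ?_).1 hae).trans measure_univ)
  exact (measurableSet_le (by fun_prop) measurable_const).nullMeasurableSet

lemma normJ_smul_add_smul {d : ℕ} (m v : EuclideanSpace ℝ (Fin d)) (c t : ℝ) :
    normJ m (c • m + t • v) = |t| * normJ m v := by
  have hsum : ∑ j, (if m j = 0 then (c • m + t • v) j ^ 2 else 0)
      = t ^ 2 * ∑ j, (if m j = 0 then v j ^ 2 else 0) := by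
    rw [Finset.mul_sum]
    refine Finset.sum_congr rfl fun j _ => ?_
    split_ifs with hj
    · simp [hj, mul_pow]
    · simp
  rw [normJ, normJ, hsum, Real.sqrt_mul (sq_nonneg t), Real.sqrt_sq_eq_abs]

lemma eventually_pos_add_mul {a b : ℝ} (ha : 0 ≤ a) (hb : a = 0 → 0 < b) :
    ∀ᶠ t in 𝓝[>] (0 : ℝ), 0 < a + t * b := by
  rcases ha.eq_or_lt with rfl | ha
  · filter_upwards [self_mem_nhdsWithin] with t ht
    simpa using mul_pos ht (hb rfl)
  · have hlim : Tendsto (fun t : ℝ => a + t * b) (𝓝 0) (𝓝 a) := by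
      simpa using ((tendsto_id (x := 𝓝 (0 : ℝ))).mul_const b).const_add a
    exact (hlim.eventually_const_lt ha).filter_mono nhdsWithin_le_nhds

lemma setOf_forall_pos_subset_interior_Kcone (p q : ℕ) :
    {x | ∀ i ∈ {i : Fin (p + q) | (i : ℕ) < p}, 0 < x i} ⊆ interior (Kcone p q 0) :=
  interior_maximal (fun _ hx i hi => (hx i hi).le) (isOpen_setOf_forall_pos _)

theorem stmt12_general (p q : ℕ)
    (μ : Measure (EuclideanSpace ℝ (Fin (p + q)))) [IsProbabilityMeasure μ]
    (m : EuclideanSpace ℝ (Fin (p + q)))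
    (hsq : Integrable (fun y => ‖y‖ ^ 2) μ)
    (hm : m ∈ QZero p q)
    (hH : ∀ u ∈ QZero p q, u ≠ 0 → μ {x | ⟪x, u⟫ ≤ 0} ≠ 1) :
    ∀ x ∈ Kcone p q 0 ∩ Gset μ m,
      ({z | ∃ f ∈ Fsub μ m, z = x + m + f} ∩ interior (Kcone p q 0) ∩
        {z | normJ m z < 1}).Nonempty := by
  rintro _ ⟨-, lam, hlam, f, hf, rfl⟩
  obtain ⟨g, hg, hgpos⟩ := exists_mem_Fsub_forall_pos hsq hH
  have hcoord : ∀ᶠ t in 𝓝[>] (0 : ℝ),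
      ∀ i : Fin (p + q), (i : ℕ) < p → 0 < (lam + 1) * m i + t * g i := by
    refine eventually_all.2 fun i => ?_
    by_cases hip : (i : ℕ) < p
    · refine (eventually_pos_add_mul (mul_nonneg (by linarith) ((hm i).1 hip)) fun h => ?_).mono
        fun _ ht _ => ht
      exact hgpos i hip ((mul_eq_zero.1 h).resolve_left (by linarith))
    · exact .of_forall fun _ hip' => absurd hip' hip
  have hnorm : ∀ᶠ t in 𝓝[>] (0 : ℝ), t * normJ m g < 1 := by
    have hlim : Tendsto (fun t : ℝ => t * normJ m g) (𝓝 0) (𝓝 0) := by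
      simpa using (tendsto_id (x := 𝓝 (0 : ℝ))).mul_const (normJ m g)
    exact (hlim.eventually_lt_const one_pos).filter_mono nhdsWithin_le_nhds
  obtain ⟨t, htcoord, htnorm, ht⟩ := (hcoord.and (hnorm.and self_mem_nhdsWithin)).exists
  refine ⟨(lam + 1) • m + t • g, ⟨⟨t • g - f, (Fsub μ m).sub_mem ((Fsub μ m).smul_mem t hg) hf,
    by module⟩, setOf_forall_pos_subset_interior_Kcone p q fun i hi => ?_⟩, ?_⟩
  · simpa using htcoord i hi
  · rw [Set.mem_ofPred_eq, normJ_smul_add_smul, abs_of_pos (Set.mem_Ioi.1 ht)]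
    exact htnorm

/-- Under (H') and `m ∈ Q×{0}^q`, for every `x ∈ K ∩ G`,
`(x + m + F) ∩ int(K) ∩ B_J(0,1) ≠ ∅`. -/
theorem stmt12 (p q : ℕ) (hp : 1 ≤ p)
    (μ : Measure (EuclideanSpace ℝ (Fin (p + q)))) [IsProbabilityMeasure μ]
    (m : EuclideanSpace ℝ (Fin (p + q)))
    (hint : Integrable (fun y => y) μ) (hmean : ∫ y, y ∂μ = m)
    (hsq : Integrable (fun y => ‖y‖ ^ 2) μ)
    (hm : m ∈ QZero p q)
    (hH : ∀ u ∈ QZero p q, u ≠ 0 → μ {x | ⟪x, u⟫ ≤ 0} ≠ 1) :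
    ∀ x ∈ Kcone p q 0 ∩ Gset μ m,
      ({z | ∃ f ∈ Fsub μ m, z = x + m + f} ∩ interior (Kcone p q 0) ∩
        {z | normJ m z < 1}).Nonempty :=
  stmt12_general p q μ m hsq hm hH
end
end
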